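/- Let A, B ∈ Mat_n(𝕋) and w ∈ {a,b}⁺ satisfy per(A) = tr(A), per(B) = tr(B), and rk_tr(w(A,B)) = n. Then tr(w(A,B)) = |w|_a · tr(A) + |w|_b · tr(B), where |w|_a and |w|_b are the numbers of occurrences of the letters a and b in w. -/

import Mathlib

attribute [local instance] Classical.propDecidable

/-- The tropical (max-plus) semiring carrier: `ℝ ∪ {−∞}`. -/
abbrev Trop : Type := WithBot ℝ

/-- Tropical matrix multiplication: `(A ⊙ B)_{i,j} = max_k (A_{i,k} + B_{k,j})`. -/
def tmul {n m p : ℕ} (A : Matrix (Fin n) (Fin m) Trop) (B : Matrix (Fin m) (Fin p) Trop) :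
    Matrix (Fin n) (Fin p) Trop :=
  fun i j => Finset.univ.sup (fun k => A i k + B k j)

/-- The tropical identity matrix. -/
def tId (n : ℕ) : Matrix (Fin n) (Fin n) Trop :=
  fun i j => if i = j then (0 : Trop) else ⊥

/-- Tropical matrix power. -/
def tPow {n : ℕ} (A : Matrix (Fin n) (Fin n) Trop) : ℕ → Matrix (Fin n) (Fin n) Trop
  | 0 => tId n
  | t + 1 => tmul A (tPow A t)

/-- Weight of a permutation: `ω(π) = Σ_i A_{i,π(i)}`. -/
def permWeight {n : ℕ} (A : Matrix (Fin n) (Fin n) Trop) (π : Equiv.Perm (Fin n)) : Trop :=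
  ∑ i, A i (π i)

/-- Tropical permanent: `per(A) = max_π ω(π)`. -/
def tPer {n : ℕ} (A : Matrix (Fin n) (Fin n) Trop) : Trop :=
  Finset.univ.sup (fun π : Equiv.Perm (Fin n) => permWeight A π)

/-- Nonsingular: exactly one permutation attains the permanent. -/
def Nonsingular {n : ℕ} (A : Matrix (Fin n) (Fin n) Trop) : Prop :=
  ∃! π : Equiv.Perm (Fin n), permWeight A π = tPer A

/-- Tropical rank: the largest `k` such that `A` has a nonsingular `k × k` submatrix. -/
noncomputable def tropRank {n : ℕ} (A : Matrix (Fin n) (Fin n) Trop) : ℕ :=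
  sSup {k : ℕ | ∃ (r : Fin k → Fin n) (c : Fin k → Fin n),
    Function.Injective r ∧ Function.Injective c ∧
    Nonsingular (fun i j => A (r i) (c j))}

/-- Factor rank: the smallest `k` such that `A = B ⊙ C` with `B` of size `n × k` and `C` of
size `k × n`. -/
noncomputable def facRank {n : ℕ} (A : Matrix (Fin n) (Fin n) Trop) : ℕ :=
  sInf {k : ℕ | ∃ (B : Matrix (Fin n) (Fin k) Trop) (C : Matrix (Fin k) (Fin n) Trop),
    A = tmul B C}

/-- Trace: `tr(A) = Σ_i A_{i,i}` in `ℝ ∪ {−∞}`. -/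
def tTrace {n : ℕ} (A : Matrix (Fin n) (Fin n) Trop) : Trop := ∑ i, A i i

/-- Evaluation of a word over the alphabet `{a, b}` (with `a = true`, `b = false`) at the
pair of tropical matrices `(A, B)`, i.e. `a ↦ A`, `b ↦ B`.  (On the empty word it returns
the identity matrix; we only use it on nonempty words.) -/
def mEval {n : ℕ} (A B : Matrix (Fin n) (Fin n) Trop) : List Bool → Matrix (Fin n) (Fin n) Trop
  | [] => tId n
  | x :: w => tmul (if x then A else B) (mEval A B w)

/-- `lcm(1, 2, …, n)`. -/
def nbar (n : ℕ) : ℕ := (Finset.Icc 1 n).lcm id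

/-- A walk on the digraph `G(A)`, given by its list of visited nodes: consecutive nodes must
be joined by an arc, i.e. have weight `≠ −∞`. -/
def IsWalk {n : ℕ} (A : Matrix (Fin n) (Fin n) Trop) (p : List (Fin n)) : Prop :=
  p.Chain' (fun i j => A i j ≠ ⊥)

/-- The weight of a walk: sum of the weights of its arcs. -/
def walkWeight {n : ℕ} (A : Matrix (Fin n) (Fin n) Trop) (p : List (Fin n)) : Trop :=
  ((p.zip p.tail).map (fun q => A q.1 q.2)).sum

/-- The set of nodes on the cycle of the permutation `τ` containing `i`. -/
noncomputable def cycFinset {n : ℕ} (τ : Equiv.Perm (Fin n)) (i : Fin n) : Finset (Fin n) :=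
  Finset.univ.filter (fun j => τ.SameCycle i j)

/-- `μ_i`: the average weight of the unique cycle of `τ` containing `i`. -/
noncomputable def mu {n : ℕ} (A : Matrix (Fin n) (Fin n) Trop) (τ : Equiv.Perm (Fin n))
    (i : Fin n) : ℝ :=
  (∑ j ∈ cycFinset τ i, WithBot.unbotD 0 (A j (τ j))) / (cycFinset τ i).card

/-- Upper triangular tropical matrix: all entries below the diagonal are `−∞`. -/
def UpperTri {n : ℕ} (A : Matrix (Fin n) (Fin n) Trop) : Prop :=
  ∀ i j : Fin n, j < i → A i j = ⊥

/-- Word substitution: replace each letter `a` (`= true`) of `w` by `w₁` and each letter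
`b` (`= false`) by `w₂`. -/
def subst (w w₁ w₂ : List Bool) : List Bool :=
  w.flatMap (fun x => if x then w₁ else w₂)

/-- `k`-fold concatenation `w^k` of a word. -/
def wpow (w : List Bool) : ℕ → List Bool
  | 0 => []
  | t + 1 => w ++ wpow w t

/-- Evaluation of a word over an alphabet `α` in a semigroup `S` under the assignment
`f : α → S`; returns `none` on the empty word. -/
def aEval {S : Type*} [Mul S] {α : Type*} (f : α → S) : List α → Option S
  | [] => none
  | x :: w => some (w.foldl (fun acc y => acc * f y) (f x))

/-!
Along the optimal permutation `g` of a nonsingular product `C ⊙ D`, each entry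
`(C ⊙ D)_{i,g(i)}` is attained at some intermediate index `h(i)`. If `h` identified two rows
`i₁ ≠ i₂`, composing `g` with the transposition `(i₁ i₂)` would give a second permutation of at
least the same weight; so `h` is a permutation, `per(C ⊙ D) ≤ per(C) + per(D)`, and the factor
`D` is again nonsingular. Iterating along the word,
`tr(w(A,B)) ≤ per(w(A,B)) ≤ |w|_a per(A) + |w|_b per(B)`, while the reverse inequality
`|w|_a tr(A) + |w|_b tr(B) ≤ tr(w(A,B))` holds for all tropical matrices.
-/

open Finset Equiv

section Tropical

variable {n : ℕ}

lemma permWeight_le_tPer (M : Matrix (Fin n) (Fin n) Trop) (π : Perm (Fin n)) :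
    permWeight M π ≤ tPer M :=
  le_sup (mem_univ π)

lemma tTrace_le_tPer (M : Matrix (Fin n) (Fin n) Trop) : tTrace M ≤ tPer M :=
  permWeight_le_tPer M 1

def IsUniqueOptimal (M : Matrix (Fin n) (Fin n) Trop) (g : Perm (Fin n)) : Prop :=
  ∀ g' ≠ g, permWeight M g' < permWeight M g

lemma IsUniqueOptimal.tPer_eq {M : Matrix (Fin n) (Fin n) Trop} {g : Perm (Fin n)}
    (hg : IsUniqueOptimal M g) : tPer M = permWeight M g := by
  refine le_antisymm (Finset.sup_le fun g' _ => ?_) (permWeight_le_tPer M g)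
  rcases eq_or_ne g' g with rfl | hne
  · exact le_rfl
  · exact (hg g' hne).le

lemma nonsingular_iff_exists_isUniqueOptimal (M : Matrix (Fin n) (Fin n) Trop) :
    Nonsingular M ↔ ∃ g, IsUniqueOptimal M g := by
  constructor
  · rintro ⟨g, hg, huniq⟩
    refine ⟨g, fun g' hne => lt_of_le_of_ne (hg ▸ permWeight_le_tPer M g') fun heq => ?_⟩
    exact hne (huniq g' (heq.trans hg))
  · rintro ⟨g, hg⟩
    refine ⟨g, (hg.tPer_eq).symm, fun g' hg' => by_contra fun hne => ?_⟩
    exact (hg g' hne).ne (hg'.trans (hg.tPer_eq))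

lemma Nonsingular.of_submatrix {M : Matrix (Fin n) (Fin n) Trop} (e f : Perm (Fin n))
    (h : Nonsingular (M.submatrix e f)) : Nonsingular M := by
  have hweight : ∀ π, permWeight (M.submatrix e f) π = permWeight M (f * π * e⁻¹) := fun π => by
    simpa [permWeight] using Equiv.sum_comp e fun j => M j (f (π (e⁻¹ j)))
  obtain ⟨g, hg⟩ := (nonsingular_iff_exists_isUniqueOptimal _).mp h
  refine (nonsingular_iff_exists_isUniqueOptimal M).mpr ⟨f * g * e⁻¹, fun g' hne => ?_⟩
  have hg' : g' = f * (f⁻¹ * g' * e) * e⁻¹ := by group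
  rw [hg', ← hweight, ← hweight]
  exact hg _ fun heq => hne (by rw [hg', heq])

lemma nonsingular_of_tropRank_eq {M : Matrix (Fin n) (Fin n) Trop} (h : tropRank M = n) :
    Nonsingular M := by
  set S : Set ℕ := {k | ∃ (r : Fin k → Fin n) (c : Fin k → Fin n),
    Function.Injective r ∧ Function.Injective c ∧ Nonsingular (fun i j => M (r i) (c j))}
  have hbdd : BddAbove S :=
    ⟨n, fun k ⟨r, _, hr, _⟩ => by simpa using Fintype.card_le_of_injective r hr⟩
  rcases S.eq_empty_or_nonempty with hS | hS
  · have hn : n = 0 := by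
      rw [← h, show tropRank M = sSup S from rfl, hS, csSup_empty, Nat.bot_eq_zero]
    subst hn
    exact (nonsingular_iff_exists_isUniqueOptimal M).mpr
      ⟨1, fun g' hne => absurd (Subsingleton.elim _ _) hne⟩
  · obtain ⟨r, c, hr, hc, hns⟩ : n ∈ S := h ▸ Nat.sSup_mem hS hbdd
    exact hns.of_submatrix (ofBijective r hr.bijective_of_finite)
      (ofBijective c hc.bijective_of_finite)

lemma sum_le_permWeight_tmul (C D : Matrix (Fin n) (Fin n) Trop) (h : Fin n → Fin n)
    (π : Perm (Fin n)) : ∑ i, (C i (h i) + D (h i) (π i)) ≤ permWeight (tmul C D) π :=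
  sum_le_sum fun i _ => le_sup (f := fun k => C i k + D k (π i)) (mem_univ (h i))

lemma permWeight_add_le_permWeight_tmul (C D : Matrix (Fin n) (Fin n) Trop)
    (σ ρ : Perm (Fin n)) :
    permWeight C σ + permWeight D ρ ≤ permWeight (tmul C D) (ρ * σ) := by
  calc permWeight C σ + permWeight D ρ = ∑ i, (C i (σ i) + D (σ i) (ρ (σ i))) := by
        rw [sum_add_distrib, permWeight, permWeight, Equiv.sum_comp σ fun j => D j (ρ j)]
    _ ≤ permWeight (tmul C D) (ρ * σ) := sum_le_permWeight_tmul C D σ (ρ * σ)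

section UniqueOptimal

variable {C D : Matrix (Fin n) (Fin n) Trop} {g : Perm (Fin n)}

lemma IsUniqueOptimal.injective_of_tmul (hg : IsUniqueOptimal (tmul C D) g) {h : Fin n → Fin n}
    (hh : permWeight (tmul C D) g = ∑ i, (C i (h i) + D (h i) (g i))) :
    Function.Injective h := by
  intro i₁ i₂ heq
  by_contra hne
  set τ := swap i₁ i₂
  have hτ : ∀ i, h (τ i) = h i := fun i => by
    rw [swap_apply_def]
    split_ifs <;> simp_all
  have hle : permWeight (tmul C D) g ≤ permWeight (tmul C D) (g * τ) :=
    calc permWeight (tmul C D) g = ∑ i, C i (h i) + ∑ i, D (h i) (g i) := by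
          rw [hh, sum_add_distrib]
      _ = ∑ i, C i (h i) + ∑ i, D (h i) (g (τ i)) := by
          rw [← Equiv.sum_comp τ fun i => D (h i) (g i)]
          simp only [hτ]
      _ = ∑ i, (C i (h i) + D (h i) ((g * τ) i)) := sum_add_distrib.symm
      _ ≤ permWeight (tmul C D) (g * τ) := sum_le_permWeight_tmul C D h (g * τ)
  exact (hg (g * τ) (by simpa [τ, swap_eq_one_iff] using hne)).not_ge hle

lemma IsUniqueOptimal.exists_permWeight_tmul_eq (hg : IsUniqueOptimal (tmul C D) g) :
    ∃ σ : Perm (Fin n), permWeight (tmul C D) g = permWeight C σ + permWeight D (g * σ⁻¹) := by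
  choose h _ hh using fun i =>
    exists_mem_eq_sup univ (univ_nonempty_iff.mpr ⟨i⟩) fun k => C i k + D k (g i)
  have hsum : permWeight (tmul C D) g = ∑ i, (C i (h i) + D (h i) (g i)) :=
    sum_congr rfl fun i _ => hh i
  let σ := ofBijective h (hg.injective_of_tmul hsum).bijective_of_finite
  refine ⟨σ, ?_⟩
  rw [hsum, sum_add_distrib, permWeight, permWeight,
    ← Equiv.sum_comp σ fun j => D j ((g * σ⁻¹) j)]
  simp [σ]

end UniqueOptimal

section Product

variable {C D : Matrix (Fin n) (Fin n) Trop}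

lemma Nonsingular.tPer_tmul_le (hCD : Nonsingular (tmul C D)) :
    tPer (tmul C D) ≤ tPer C + tPer D := by
  obtain ⟨g, hg⟩ := (nonsingular_iff_exists_isUniqueOptimal _).mp hCD
  obtain ⟨σ, hσ⟩ := hg.exists_permWeight_tmul_eq
  rw [hg.tPer_eq, hσ]
  exact add_le_add (permWeight_le_tPer C σ) (permWeight_le_tPer D _)

lemma Nonsingular.of_tmul (hCD : Nonsingular (tmul C D)) : Nonsingular D := by
  obtain ⟨g, hg⟩ := (nonsingular_iff_exists_isUniqueOptimal _).mp hCD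
  obtain ⟨σ, hσ⟩ := hg.exists_permWeight_tmul_eq
  refine (nonsingular_iff_exists_isUniqueOptimal D).mpr
    ⟨g * σ⁻¹, fun ρ hne => lt_of_not_ge fun hle => ?_⟩
  refine (hg (ρ * σ) fun heq => hne (eq_mul_inv_of_mul_eq heq)).not_ge ?_
  calc permWeight (tmul C D) g = permWeight C σ + permWeight D (g * σ⁻¹) := hσ
    _ ≤ permWeight C σ + permWeight D ρ := by gcongr
    _ ≤ permWeight (tmul C D) (ρ * σ) := permWeight_add_le_permWeight_tmul C D σ ρ

end Product

lemma tPer_tId_le : tPer (tId n) ≤ 0 :=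
  Finset.sup_le fun _ _ => sum_nonpos fun _ _ => by unfold tId; split_ifs <;> simp

lemma tTrace_tId : tTrace (tId n) = 0 := by
  simp [tTrace, tId]

lemma tTrace_add_le_tTrace_tmul (C D : Matrix (Fin n) (Fin n) Trop) :
    tTrace C + tTrace D ≤ tTrace (tmul C D) :=
  permWeight_add_le_permWeight_tmul C D 1 1

variable (A B : Matrix (Fin n) (Fin n) Trop)

lemma tPer_mEval_le : ∀ w : List Bool, Nonsingular (mEval A B w) →
    tPer (mEval A B w) ≤ w.count true • tPer A + w.count false • tPer B
  | [], _ => by simpa [mEval] using tPer_tId_le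
  | x :: w, h =>
    calc tPer (mEval A B (x :: w)) ≤ tPer (if x then A else B) + tPer (mEval A B w) :=
          h.tPer_tmul_le
      _ ≤ tPer (if x then A else B) + (w.count true • tPer A + w.count false • tPer B) := by
          gcongr
          exact tPer_mEval_le w h.of_tmul
      _ = (x :: w).count true • tPer A + (x :: w).count false • tPer B := by
          cases x <;> simp [succ_nsmul] <;> abel

lemma le_tTrace_mEval : ∀ w : List Bool,
    w.count true • tTrace A + w.count false • tTrace B ≤ tTrace (mEval A B w)
  | [] => by simp [mEval, tTrace_tId]
  | x :: w =>
    calc (x :: w).count true • tTrace A + (x :: w).count false • tTrace B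
        = tTrace (if x then A else B)
            + (w.count true • tTrace A + w.count false • tTrace B) := by
          cases x <;> simp [succ_nsmul] <;> abel
      _ ≤ tTrace (if x then A else B) + tTrace (mEval A B w) := by
          gcongr
          exact le_tTrace_mEval w
      _ ≤ tTrace (mEval A B (x :: w)) := tTrace_add_le_tTrace_tmul _ _

end Tropical

theorem trace_eval_general {n : ℕ} (A B : Matrix (Fin n) (Fin n) Trop)
    (w : List Bool)
    (hA : tPer A = tTrace A) (hB : tPer B = tTrace B)
    (hrk : tropRank (mEval A B w) = n) :
    tTrace (mEval A B w) = w.count true • tTrace A + w.count false • tTrace B := by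
  refine le_antisymm ?_ (le_tTrace_mEval A B w)
  calc tTrace (mEval A B w) ≤ tPer (mEval A B w) := tTrace_le_tPer _
    _ ≤ w.count true • tPer A + w.count false • tPer B :=
        tPer_mEval_le A B w (nonsingular_of_tropRank_eq hrk)
    _ = w.count true • tTrace A + w.count false • tTrace B := by rw [hA, hB]

/-- trace of the evaluation.  Under condition (PR),
`tr(w(A,B)) = |w|_a · tr(A) + |w|_b · tr(B)`. -/
theorem trace_eval {n : ℕ} (A B : Matrix (Fin n) (Fin n) Trop)
    (w : List Bool) (hw : w ≠ [])
    (hA : tPer A = tTrace A) (hB : tPer B = tTrace B)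
    (hrk : tropRank (mEval A B w) = n) :
    tTrace (mEval A B w) = w.count true • tTrace A + w.count false • tTrace B :=
  trace_eval_general A B w hA hB hrk
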